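/- Let n ≥ 1 and let μ_1, …, μ_n be real numbers with −1 < μ_k < 1 for every k. Then F(a) tends to +∞ as a → +∞, where F(a) = ∫_{−1/(1+2a)}^{1} x·∏_{k=1}^{n}(1 + μ_{k,a}·x) dx with μ_{k,a} = μ_k + a(1+μ_k). -/

import Mathlib

open Real MeasureTheory Filter Set

set_option maxHeartbeats 1000000 in
theorem F_tendsto_atTop (n : ℕ) (hn : 1 ≤ n) (μ : Fin n → ℝ)
    (hμ : ∀ k, -1 < μ k ∧ μ k < 1) :
    Tendsto (fun a : ℝ =>
        ∫ x in (-1/(1+2*a))..1, x * ∏ k, (1 + (μ k + a * (1 + μ k)) * x))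
      atTop atTop := by
  have k0 : Fin n := ⟨0, hn⟩
  -- the lower bounding function tends to atTop
  have hg : Tendsto (fun a : ℝ => (μ k0 + a * (1 + μ k0)) / 3 - 1) atTop atTop := by
    have h1 : (0:ℝ) < 1 + μ k0 := by linarith [(hμ k0).1]
    have h2 : Tendsto (fun a : ℝ => a * (1 + μ k0)) atTop atTop :=
      tendsto_id.atTop_mul_const h1
    have h3 : Tendsto (fun a : ℝ => μ k0 + a * (1 + μ k0)) atTop atTop :=
      tendsto_atTop_add_const_left _ _ h2
    exact tendsto_atTop_add_const_right _ _ (h3.atTop_div_const (by norm_num))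
  refine tendsto_atTop_mono' atTop ?_ hg
  have hev : ∀ᶠ a : ℝ in atTop, 1 ≤ a ∧ ∀ k, 0 ≤ μ k + a * (1 + μ k) := by
    refine (eventually_ge_atTop 1).and (eventually_all.2 fun k => ?_)
    have h1 : (0:ℝ) < 1 + μ k := by linarith [(hμ k).1]
    exact (tendsto_atTop_add_const_left _ _ (tendsto_id.atTop_mul_const h1)).eventually_ge_atTop 0
  filter_upwards [hev] with a ha
  obtain ⟨ha1, hc⟩ := ha
  set c : Fin n → ℝ := fun k => μ k + a * (1 + μ k) with hcdef
  have hc' : ∀ k, 0 ≤ c k := hc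
  have ha0 : (0:ℝ) < 1 + 2 * a := by linarith
  set L : ℝ := 1 / (1 + 2 * a) with hL
  have hL0 : 0 < L := by positivity
  have hL1 : L ≤ 1 := by
    rw [hL, div_le_one ha0]; linarith
  -- each c k ≤ 1 + 2a, so c k * L ≤ 1
  have hcle : ∀ k, c k * L ≤ 1 := by
    intro k
    have h1 : c k ≤ 1 + 2 * a := by
      have := (hμ k).2
      simp only [hcdef]
      nlinarith
    calc c k * L ≤ (1 + 2 * a) * L := by
          exact mul_le_mul_of_nonneg_right h1 hL0.le
      _ = 1 := by rw [hL]; field_simp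
  -- continuity / integrability
  have hcont : Continuous (fun x : ℝ => x * ∏ k, (1 + c k * x)) := by
    exact continuous_id.mul (continuous_finset_prod _ fun k _ => continuous_const.add (continuous_const.mul continuous_id))
  have hint : ∀ p q : ℝ, IntervalIntegrable (fun x : ℝ => x * ∏ k, (1 + c k * x))
      volume p q := fun p q => hcont.intervalIntegrable p q
  have hneg : -L ≤ (0:ℝ) := by linarith
  -- split the integral
  have hsplit : (∫ x in (-1/(1+2*a))..1, x * ∏ k, (1 + c k * x))
      = (∫ x in (-L)..0, x * ∏ k, (1 + c k * x))
        + ∫ x in (0:ℝ)..1, x * ∏ k, (1 + c k * x) := by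
    rw [intervalIntegral.integral_add_adjacent_intervals (hint _ _) (hint _ _)]
    norm_num [hL, neg_div]
  -- bound on the negative part
  have hlow : (-1 : ℝ) ≤ ∫ x in (-L)..0, x * ∏ k, (1 + c k * x) := by
    have hmono : (∫ x in (-L)..0, (-1 : ℝ)) ≤ ∫ x in (-L)..0, x * ∏ k, (1 + c k * x) := by
      apply intervalIntegral.integral_mono_on hneg (intervalIntegrable_const) (hint _ _)
      intro x hx
      obtain ⟨hx1, hx2⟩ := hx
      have hprod0 : (0:ℝ) ≤ ∏ k, (1 + c k * x) := by
        apply Finset.prod_nonneg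
        intro k _
        have : c k * (-L) ≤ c k * x := mul_le_mul_of_nonneg_left hx1 (hc' k)
        have h2 : -(c k * L) ≥ -1 := by linarith [hcle k]
        linarith
      have hprod1 : (∏ k, (1 + c k * x)) ≤ 1 := by
        apply Finset.prod_le_one
        · intro k _
          have : c k * (-L) ≤ c k * x := mul_le_mul_of_nonneg_left hx1 (hc' k)
          have h2 : -(c k * L) ≥ -1 := by linarith [hcle k]
          linarith
        · intro k _
          linarith [mul_nonneg (hc' k) (neg_nonneg.2 hx2)]
      have : x * 1 ≤ x * ∏ k, (1 + c k * x) := by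
        exact mul_le_mul_of_nonpos_left hprod1 hx2
      linarith
    have hconst : (∫ x in (-L)..0, (-1 : ℝ)) = -L := by
      rw [intervalIntegral.integral_const, smul_eq_mul]; ring
    linarith [hconst ▸ hmono]
  -- bound on the positive part
  have hhigh : c k0 / 3 ≤ ∫ x in (0:ℝ)..1, x * ∏ k, (1 + c k * x) := by
    have hmono : (∫ x in (0:ℝ)..1, c k0 * x ^ 2) ≤ ∫ x in (0:ℝ)..1, x * ∏ k, (1 + c k * x) := by
      apply intervalIntegral.integral_mono_on (by norm_num)
        ((continuous_const.mul (continuous_pow 2)).intervalIntegrable 0 1) (hint _ _)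
      intro x hx
      obtain ⟨hx1, hx2⟩ := hx
      have hfac : ∀ k, 1 ≤ 1 + c k * x := by
        intro k; nlinarith [mul_nonneg (hc' k) hx1]
      have hle : 1 + c k0 * x ≤ ∏ k, (1 + c k * x) := by
        calc 1 + c k0 * x = ∏ k, (if k = k0 then 1 + c k0 * x else 1) := by
              rw [Finset.prod_ite_eq']
              simp
          _ ≤ ∏ k, (1 + c k * x) := by
              apply Finset.prod_le_prod
              · intro k _
                split_ifs with h
                · linarith [hfac k0]
                · norm_num
              · intro k _
                split_ifs with h
                · exact h ▸ le_rfl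
                · exact hfac k
      have : c k0 * x ≤ ∏ k, (1 + c k * x) := by linarith
      calc c k0 * x ^ 2 = x * (c k0 * x) := by ring
        _ ≤ x * ∏ k, (1 + c k * x) := mul_le_mul_of_nonneg_left this hx1
    have hconst : (∫ x in (0:ℝ)..1, c k0 * x ^ 2) = c k0 / 3 := by
      rw [intervalIntegral.integral_const_mul, integral_pow]
      norm_num
      ring
    linarith [hconst ▸ hmono]
  change c k0 / 3 - 1 ≤ ∫ x in (-1/(1+2*a))..1, x * ∏ k, (1 + c k * x)
  rw [hsplit]
  linarith
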